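/- arXiv:1512.01333 — 3 statements merged into one kernel-verified Lean document; each statement's English description precedes it below -/
import Mathlib

section
/- Let T be a rooted tree with root v and branches T_1, ..., T_k, and let S(T), S(T_1), ..., S(T_k) denote the subdivision trees (rooted at the images of the original roots). Then M_0(S(T), x) = ∏_{j=1}^k ( x·M_0(S(T_j), x) + M(S(T_j), x) ). -/
/-- A rooted tree: a root node together with a list of branches (rooted subtrees). -/
inductive RTree : Type
  | node : List RTree → RTree

namespace RTree

/-- Auxiliary fold: from the list of pairs `(M0 Tᵢ x, M Tᵢ x)` of the branches,
compute `(∏ᵢ M(Tᵢ,x), Σⱼ M0(Tⱼ,x) ∏_{i≠j} M(Tᵢ,x))`. -/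
def comb : List (ℝ × ℝ) → ℝ × ℝ
  | [] => (1, 0)
  | (m0, m) :: rest =>
    let pr := comb rest
    (m * pr.1, m0 * pr.1 + m * pr.2)

/-- `MM T x = (M₀(T,x), M₁(T,x))`: generating functions of matchings of `T`
not saturating / saturating the root. -/
def MM : RTree → ℝ → ℝ × ℝ
  | .node ts, x =>
    let pr := comb (ts.attach.map fun t =>
      let q := MM t.1 x
      (q.1, q.1 + q.2))
    (pr.1, x * pr.2)
  decreasing_by have := List.sizeOf_lt_of_mem t.2; simp only [RTree.node.sizeOf_spec]; omega

/-- Generating function of matchings not saturating the root. -/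
def M0 (t : RTree) (x : ℝ) : ℝ := (MM t x).1

/-- Generating function of matchings saturating the root. -/
def M1 (t : RTree) (x : ℝ) : ℝ := (MM t x).2

/-- The matching generating function `M(T,x) = M₀(T,x) + M₁(T,x)`. -/
def M (t : RTree) (x : ℝ) : ℝ := M0 t x + M1 t x

/-- `τ(T,x) = M₀(T,x)/M(T,x)`. -/
noncomputable def tau (t : RTree) (x : ℝ) : ℝ := M0 t x / M t x

/-- The subdivision tree: insert a new vertex in every edge. -/
def subdiv : RTree → RTree
  | .node ts => .node (ts.attach.map fun t => .node [subdiv t.1])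
  decreasing_by have := List.sizeOf_lt_of_mem t.2; simp only [RTree.node.sizeOf_spec]; omega

/-- Number of vertices. -/
def order : RTree → ℕ
  | .node ts => 1 + (ts.attach.map fun t => order t.1).sum
  decreasing_by have := List.sizeOf_lt_of_mem t.2; simp only [RTree.node.sizeOf_spec]; omega

end RTree

namespace RTree

theorem comb_fst (l : List (ℝ × ℝ)) : (comb l).1 = (l.map Prod.snd).prod := by
  induction l with
  | nil => rfl
  | cons p l ih => simp [comb, ih]

theorem M0_node (ts : List RTree) (x : ℝ) :
    M0 (node ts) x = (ts.map fun t => M t x).prod := by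
  rw [M0, MM, comb_fst, List.map_map]
  exact congrArg List.prod (List.attach_map_val (f := fun t => M t x))

/-- In a tree with one branch, the root is either left free or matched to the branch's root. -/
theorem M_node_singleton (t : RTree) (x : ℝ) :
    M (node [t]) x = M t x + x * M0 t x := by
  simp only [M, M0, M1, MM, List.attach_cons, List.attach_nil, List.map_cons, List.map_nil,
    comb]
  ring

theorem subdiv_node (ts : List RTree) :
    subdiv (node ts) = node (ts.map fun t => node [subdiv t]) := by
  rw [subdiv]
  exact congrArg node (List.attach_map_val (f := fun t => node [subdiv t]))

end RTree

open RTree in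
/-- Lemma 2.3(9): for a rooted tree `T` with branches `ts`,
`M₀(S(T),x) = ∏ⱼ ( x·M₀(S(Tⱼ),x) + M(S(Tⱼ),x) )`. -/
theorem M0_subdiv_node (ts : List RTree) (x : ℝ) :
    M0 (subdiv (RTree.node ts)) x =
      (ts.map fun t => x * M0 (subdiv t) x + M (subdiv t) x).prod := by
  rw [subdiv_node, M0_node, List.map_map]
  congr 1
  refine List.map_congr_left fun t _ => ?_
  simp only [Function.comp_apply, M_node_singleton]
  ring
end

section
/- For every tree T of order n, the Laplacian coefficient c_k(T) equals the number of k-edge matchings of the subdivision tree S(T), i.e., c_k(T) = m(S(T), k) for k = 0, ..., n. Consequently, the Laplacian coefficient generating function φ(T,x) = Σ_{k=0}^{n-1} c_k(T) x^k equals the matching generating function M(S(T), x). -/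
open scoped Classical

variable {V : Type*}

/-- Degree of a vertex. -/
noncomputable def vdeg (G : SimpleGraph V) (v : V) : ℕ := (G.neighborSet v).ncard

/-- The subdivision graph `S(G)`: insert a new vertex in every edge of `G`.
Its vertices are the vertices of `G` together with the edges of `G`, and a vertex
`v` is adjacent to an edge `e` iff `v` is an endpoint of `e` in `G`. -/
def subdivision (G : SimpleGraph V) : SimpleGraph (V ⊕ G.edgeSet) where
  Adj a b :=
    (∃ v e, a = Sum.inl v ∧ b = Sum.inr e ∧ v ∈ (e : Sym2 V)) ∨
      (∃ v e, b = Sum.inl v ∧ a = Sum.inr e ∧ v ∈ (e : Sym2 V))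
  symm := ⟨fun a b h => Or.symm h⟩
  loopless := ⟨fun a => by rintro (⟨v, e, rfl, h, -⟩ | ⟨v, e, rfl, h, -⟩) <;> simp at h⟩

/-- A set of edges of `G` forms a matching: pairwise disjoint edges. -/
def IsMatchingSet (G : SimpleGraph V) (s : Set (Sym2 V)) : Prop :=
  s ⊆ G.edgeSet ∧ s.Pairwise fun e f => ∀ v, v ∈ e → v ∉ f

/-- `matchCount G k` is the number `m(G,k)` of `k`-edge matchings of `G`. -/
noncomputable def matchCount (G : SimpleGraph V) (k : ℕ) : ℕ :=
  {s : Set (Sym2 V) | IsMatchingSet G s ∧ s.ncard = k}.ncard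

/-- The matching generating function `M(G,x) = Σ_k m(G,k) x^k`. -/
noncomputable def matchGen (G : SimpleGraph V) [Fintype V] (x : ℝ) : ℝ :=
  ∑ k ∈ Finset.range (Fintype.card V + 1), (matchCount G k : ℝ) * x ^ k

/-- The Laplacian matrix `D(G) - A(G)` (over ℝ). -/
noncomputable def lapM (G : SimpleGraph V) [Fintype V] : Matrix V V ℝ :=
  Matrix.of fun i j =>
    if i = j then (vdeg G i : ℝ) else if G.Adj i j then -1 else 0

/-- The adjacency matrix (over ℝ). -/
noncomputable def adjM (G : SimpleGraph V) [Fintype V] : Matrix V V ℝ :=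
  Matrix.of fun i j => if G.Adj i j then 1 else 0

/-- The signless Laplacian matrix `D(G) + A(G)` (over ℝ). -/
noncomputable def signlessLapM (G : SimpleGraph V) [Fintype V] : Matrix V V ℝ :=
  Matrix.of fun i j =>
    if i = j then (vdeg G i : ℝ) else if G.Adj i j then 1 else 0

lemma adjM_isHermitian (G : SimpleGraph V) [Fintype V] :
    (adjM G).IsHermitian := by
  unfold Matrix.IsHermitian
  ext i j
  simp only [Matrix.conjTranspose_apply, adjM, Matrix.of_apply, star_trivial]
  rw [SimpleGraph.adj_comm]

lemma lapM_isHermitian (G : SimpleGraph V) [Fintype V] :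
    (lapM G).IsHermitian := by
  unfold Matrix.IsHermitian
  ext i j
  simp only [Matrix.conjTranspose_apply, lapM, Matrix.of_apply, star_trivial]
  by_cases h : i = j
  · subst h; rfl
  · simp only [h, Ne.symm h, if_false]
    rw [SimpleGraph.adj_comm]

lemma signlessLapM_isHermitian (G : SimpleGraph V) [Fintype V] :
    (signlessLapM G).IsHermitian := by
  unfold Matrix.IsHermitian
  ext i j
  simp only [Matrix.conjTranspose_apply, signlessLapM, Matrix.of_apply, star_trivial]
  by_cases h : i = j
  · subst h; rfl
  · simp only [h, Ne.symm h, if_false]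
    rw [SimpleGraph.adj_comm]

/-- The `k`-th Laplacian coefficient `c_k(G)`:
`det(λI - L(G)) = Σ_k (-1)^k c_k(G) λ^{n-k}`. -/
noncomputable def lapCoeff (G : SimpleGraph V) [Fintype V] (k : ℕ) : ℝ :=
  (-1) ^ k * (lapM G).charpoly.coeff (Fintype.card V - k)

/-- The Laplacian coefficient generating function `φ(G,x) = Σ_{k=0}^{n-1} c_k(G) x^k`. -/
noncomputable def lapGen (G : SimpleGraph V) [Fintype V] (x : ℝ) : ℝ :=
  ∑ k ∈ Finset.range (Fintype.card V), lapCoeff G k * x ^ k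

/-- The graph energy: sum of the absolute values of the adjacency eigenvalues. -/
noncomputable def energy (G : SimpleGraph V) [Fintype V] : ℝ :=
  ∑ i, |(adjM_isHermitian G).eigenvalues i|

/-- The Laplacian-energy-like invariant: sum of the square roots of the
Laplacian eigenvalues. -/
noncomputable def LEL (G : SimpleGraph V) [Fintype V] : ℝ :=
  ∑ i, Real.sqrt ((lapM_isHermitian G).eigenvalues i)

/-- The incidence energy: sum of the singular values of the incidence matrix,
i.e. the sum of the square roots of the signless Laplacian eigenvalues. -/
noncomputable def IE (G : SimpleGraph V) [Fintype V] : ℝ :=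
  ∑ i, Real.sqrt ((signlessLapM_isHermitian G).eigenvalues i)

/-- Hosoya index `Z(G) = Σ_k m(G,k)`. -/
noncomputable def hosoya (G : SimpleGraph V) [Fintype V] : ℕ :=
  ∑ k ∈ Finset.range (Fintype.card V + 1), matchCount G k

/-- The children of `v` in the tree `T` rooted at `v₀`. -/
def rchildren (T : SimpleGraph V) (v₀ v : V) : Set V :=
  {u | T.Adj v u ∧ T.dist v₀ u = T.dist v₀ v + 1}

/-- In the tree `T` rooted at `v₀`, the subtree hanging at `u` is a complete
`d`-ary tree: for some height `h`, every descendant of `u` at distance `< h`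
from `u` has exactly `d` children and every other descendant has none. -/
def IsCompleteAry (T : SimpleGraph V) (v₀ : V) (d : ℕ) (u : V) : Prop :=
  ∃ h : ℕ, ∀ w, T.dist v₀ w = T.dist v₀ u + T.dist u w →
    (rchildren T v₀ w).ncard = if T.dist u w < h then d else 0

/-- `T` is the greedy tree with maximum degree `Δ` (Definition 1.2, with
`Δ = d+1`): `T` is a tree having a root `v₀` of degree `Δ` such that the heights
of any two pendent vertices differ by at most one, and for every vertex at most
one child-subtree fails to be a complete `(Δ-1)`-ary tree. -/
def IsGreedyTree (Δ : ℕ) (T : SimpleGraph V) : Prop :=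
  T.IsTree ∧ ∃ v₀ : V,
    vdeg T v₀ = Δ ∧
    (∀ u w : V, vdeg T u = 1 → vdeg T w = 1 → T.dist v₀ u ≤ T.dist v₀ w + 1) ∧
    ∀ v : V, {u | u ∈ rchildren T v₀ v ∧ ¬ IsCompleteAry T v₀ (Δ - 1) u}.Subsingleton

/-!
For a tree `T`, conjugating by the diagonal `±1` matrix of a two-colouring turns the Laplacian
`L = D - A` into the signless Laplacian `Q = D + A = B Bᵀ`, where `B` is the vertex–edge incidence
matrix. The adjacency matrix of `S(T)` is the block matrix `[[0, B], [Bᵀ, 0]]`, and its Schur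
complement gives `x · det(x - A(S(T))) = det(x² - Q)`. As `S(T)` is again a tree, a permutation
contributing to `det(x - A(S(T)))` moves points only along edges and is therefore an involution,
i.e. a matching; so this determinant is the matching polynomial
`Σ_k (-1)^k m(S(T),k) x^(2n-1-2k)`, and comparing coefficients gives `c_k(T) = m(S(T),k)`.
-/

open Finset Polynomial

namespace SimpleGraph

variable {G : SimpleGraph V} {h : V → ℕ}

/-- `h` grades `G` like the depth function of a rooted forest. -/
structure IsForestHeight (G : SimpleGraph V) (h : V → ℕ) : Prop where
  ne_of_adj : ∀ ⦃a b⦄, G.Adj a b → h a ≠ h b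
  eq_of_adj_of_lt : ∀ ⦃x a b⦄, G.Adj x a → G.Adj x b → h a < h x → h b < h x → a = b

theorem IsTree.mem_support_of_adj_of_dist_lt (hG : G.IsTree) {r v u : V} {q : G.Walk r v}
    (hq : q.IsPath) (hadj : G.Adj v u) (hu : G.dist r u < G.dist r v) : u ∈ q.support := by
  obtain ⟨p, hp, hpl⟩ := (hG.connected r u).exists_path_of_dist
  refine hG.isAcyclic.mem_support_of_ne_mem_support_of_adj_of_isPath hq hp hadj fun hv => ?_
  have := dist_le (p.takeUntil v hv)
  have := p.length_takeUntil_le_length hv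
  omega

theorem IsTree.isForestHeight_dist (hG : G.IsTree) (r : V) : G.IsForestHeight (G.dist r) where
  ne_of_adj _ _ hab := hG.dist_ne_of_adj r hab
  eq_of_adj_of_lt x a b ha hb ha' hb' := by
    obtain ⟨q, hq, -⟩ := (hG.connected r x).exists_path_of_dist
    rw [hG.isAcyclic.eq_penultimate_of_adj_end hq ha (hG.mem_support_of_adj_of_dist_lt hq ha ha'),
      hG.isAcyclic.eq_penultimate_of_adj_end hq hb (hG.mem_support_of_adj_of_dist_lt hq hb hb')]

/-- On the points not fixed by `σ²`, one of maximal height would have the two distinct lower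
neighbours `σ w` and `σ⁻¹ w`. -/
theorem IsForestHeight.involutive_of_forall_adj [Finite V] (hh : G.IsForestHeight h)
    {σ : Equiv.Perm V} (hσ : ∀ i, σ i ≠ i → G.Adj i (σ i)) : Function.Involutive σ := by
  by_contra hinv
  set S := {x | σ (σ x) ≠ x}
  have hS : S.Nonempty := not_forall.1 hinv
  obtain ⟨w, hwS, hmax⟩ := S.exists_max_image h S.toFinite hS
  have hmoved : ∀ x ∈ S, σ x ≠ x := fun x hx hfix => hx (by rw [hfix, hfix])
  have hfwd : σ w ∈ S := fun h' => hwS (σ.injective h')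
  have hback : σ.symm w ∈ S := by
    simp only [S, Set.mem_ofPred_eq, Equiv.apply_symm_apply]
    exact fun h' => hwS (by rw [h', Equiv.apply_symm_apply])
  have hup : G.Adj w (σ w) := hσ w (hmoved w hwS)
  have hdown : G.Adj w (σ.symm w) := by
    simpa using (hσ _ (hmoved _ hback)).symm
  have hlt : ∀ x ∈ S, G.Adj w x → h x < h w := fun x hx hadj =>
    (hmax x hx).lt_of_ne (hh.ne_of_adj hadj).symm
  have hpar := hh.eq_of_adj_of_lt hup hdown (hlt _ hfwd hup) (hlt _ hback hdown)
  exact hwS (by rw [hpar, Equiv.apply_symm_apply])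

@[simp] theorem subdivision_adj_inl_inr {v : V} {e : G.edgeSet} :
    (subdivision G).Adj (.inl v) (.inr e) ↔ v ∈ (e : Sym2 V) := by
  simp [subdivision]

@[simp] theorem subdivision_adj_inr_inl {v : V} {e : G.edgeSet} :
    (subdivision G).Adj (.inr e) (.inl v) ↔ v ∈ (e : Sym2 V) := by
  simp [subdivision]

@[simp] theorem not_subdivision_adj_inl_inl {v w : V} :
    ¬(subdivision G).Adj (.inl v) (.inl w) := by
  simp [subdivision]

@[simp] theorem not_subdivision_adj_inr_inr {e f : G.edgeSet} :
    ¬(subdivision G).Adj (.inr e) (.inr f) := by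
  simp [subdivision]

theorem exists_adj_of_mem_edgeSet (e : G.edgeSet) {v : V} (hv : v ∈ (e : Sym2 V)) :
    ∃ u, G.Adj v u ∧ (e : Sym2 V) = s(v, u) := by
  obtain ⟨u, hu⟩ := Sym2.mem_iff_exists.1 hv
  exact ⟨u, G.mem_edgeSet.1 (hu ▸ e.2), hu⟩

def subdivisionHeight (G : SimpleGraph V) (h : V → ℕ) : V ⊕ G.edgeSet → ℕ :=
  Sum.elim (fun v => 2 * h v)
    fun e => Sym2.lift ⟨fun a b => h a + h b, fun _ _ => Nat.add_comm _ _⟩ e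

theorem IsForestHeight.subdivision (hh : G.IsForestHeight h) :
    (subdivision G).IsForestHeight (subdivisionHeight G h) where
  ne_of_adj := by
    suffices ∀ v (e : G.edgeSet), v ∈ (e : Sym2 V) →
        subdivisionHeight G h (.inl v) ≠ subdivisionHeight G h (.inr e) by
      rintro (v | e) (w | f) hadj <;> simp at hadj
      · exact this v f hadj
      · exact (this w e hadj).symm
    intro v e hv
    obtain ⟨u, hvu, he⟩ := exists_adj_of_mem_edgeSet e hv
    have := hh.ne_of_adj hvu
    simp only [subdivisionHeight, Sum.elim_inl, Sum.elim_inr, he, Sym2.lift_mk]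
    omega
  eq_of_adj_of_lt := by
    rintro (v | e) (a | a) (b | b) ha hb ha' hb' <;> simp at ha hb
    · obtain ⟨u, hvu, hau⟩ := exists_adj_of_mem_edgeSet a ha
      obtain ⟨w, hvw, hbw⟩ := exists_adj_of_mem_edgeSet b hb
      simp only [subdivisionHeight, Sum.elim_inl, Sum.elim_inr, hau, hbw, Sym2.lift_mk] at ha' hb'
      obtain rfl := hh.eq_of_adj_of_lt hvu hvw (by omega) (by omega)
      rw [Subtype.ext (hau.trans hbw.symm)]
    · congr 1
      by_contra hab
      obtain ⟨u, hau, he⟩ := exists_adj_of_mem_edgeSet e ha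
      have hb : b = a ∨ b = u := by simpa [he] using hb
      obtain rfl := hb.resolve_left (Ne.symm hab)
      simp only [subdivisionHeight, Sum.elim_inl, Sum.elim_inr, he, Sym2.lift_mk] at ha' hb'
      omega

end SimpleGraph

section Matchings

variable [Fintype V] {G : SimpleGraph V} {σ τ : Equiv.Perm V}

noncomputable def permEdges (σ : Equiv.Perm V) : Finset (Sym2 V) :=
  σ.support.image fun i => s(i, σ i)

theorem eq_mk_of_mem_permEdges (hσ : Function.Involutive σ) {e : Sym2 V}
    (he : e ∈ permEdges σ) {v : V} (hv : v ∈ e) : e = s(v, σ v) := by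
  obtain ⟨i, -, rfl⟩ := mem_image.1 he
  rcases Sym2.mem_iff.1 hv with rfl | rfl
  · rfl
  · rw [hσ, Sym2.eq_swap]

theorem apply_eq_of_mk_mem_permEdges (hσ : Function.Involutive σ) {i j : V}
    (h : s(i, j) ∈ permEdges σ) : σ i = j :=
  (Sym2.congr_right.1 (eq_mk_of_mem_permEdges hσ h (Sym2.mem_mk_left i j))).symm

theorem card_support_eq_two_mul_card_permEdges (hσ : Function.Involutive σ) :
    #σ.support = 2 * #(permEdges σ) := by
  rw [permEdges, card_eq_sum_card_image (fun i => s(i, σ i)) σ.support, mul_comm]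
  refine sum_const_nat fun e he => ?_
  obtain ⟨i, hi, rfl⟩ := mem_image.1 he
  have hi : σ i ≠ i := Equiv.Perm.mem_support.1 hi
  have hfiber : {j ∈ σ.support | s(j, σ j) = s(i, σ i)} = {i, σ i} := by
    ext j
    simp only [mem_filter, Equiv.Perm.mem_support, mem_insert, mem_singleton, Sym2.eq_iff]
    constructor
    · rintro ⟨-, ⟨rfl, -⟩ | ⟨rfl, -⟩⟩ <;> simp
    · rintro (h | h) <;> rw [h] <;> simp [hσ i, hi, Ne.symm hi]
  rw [hfiber, card_pair hi.symm]

theorem eq_of_permEdges_eq (hσ : Function.Involutive σ) (hτ : Function.Involutive τ)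
    (h : permEdges σ = permEdges τ) : σ = τ := by
  have moved : ∀ {σ τ : Equiv.Perm V}, Function.Involutive τ → permEdges σ = permEdges τ →
      ∀ i, σ i ≠ i → τ i = σ i := fun hτ h i hi =>
    apply_eq_of_mk_mem_permEdges hτ (h ▸ mem_image_of_mem _ (Equiv.Perm.mem_support.2 hi))
  ext i
  by_cases hσi : σ i = i
  · by_cases hτi : τ i = i
    · rw [hσi, hτi]
    · exact moved hσ h.symm i hτi
  · exact (moved hτ h i hσi).symm

theorem isMatchingSet_permEdges (hσ : Function.Involutive σ)
    (hadj : ∀ i, σ i ≠ i → G.Adj i (σ i)) : IsMatchingSet G (permEdges σ : Set (Sym2 V)) := by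
  refine ⟨?_, fun e he f hf hef v hve hvf => hef ?_⟩
  · intro e he
    obtain ⟨i, hi, rfl⟩ := mem_image.1 he
    exact hadj i (Equiv.Perm.mem_support.1 hi)
  · exact (eq_mk_of_mem_permEdges hσ he hve).trans (eq_mk_of_mem_permEdges hσ hf hvf).symm

noncomputable def matchingPartner (M : Set (Sym2 V)) (i : V) : V :=
  if h : ∃ j, s(i, j) ∈ M then h.choose else i

theorem IsMatchingSet.matchingPartner_eq {M : Set (Sym2 V)} (hM : IsMatchingSet G M) {i j : V}
    (hij : s(i, j) ∈ M) : matchingPartner M i = j := by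
  have hex : ∃ j, s(i, j) ∈ M := ⟨j, hij⟩
  rw [matchingPartner, dif_pos hex]
  by_contra hne
  exact hM.2 hex.choose_spec hij (fun heq => hne (Sym2.congr_right.1 heq)) i (Sym2.mem_mk_left _ _)
    (Sym2.mem_mk_left _ _)

theorem IsMatchingSet.involutive_matchingPartner {M : Set (Sym2 V)} (hM : IsMatchingSet G M) :
    Function.Involutive (matchingPartner M) := by
  intro i
  by_cases hex : ∃ j, s(i, j) ∈ M
  · have hmem : s(matchingPartner M i, i) ∈ M := by
      rw [Sym2.eq_swap, matchingPartner, dif_pos hex]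
      exact hex.choose_spec
    exact hM.matchingPartner_eq hmem
  · have hfix : matchingPartner M i = i := by rw [matchingPartner, dif_neg hex]
    rw [hfix, hfix]

theorem IsMatchingSet.permEdges_toPerm {M : Set (Sym2 V)} (hM : IsMatchingSet G M) :
    (permEdges (hM.involutive_matchingPartner.toPerm _) : Set (Sym2 V)) = M := by
  ext e
  simp only [permEdges, coe_image, Set.mem_image, mem_coe, Equiv.Perm.mem_support,
    Function.Involutive.coe_toPerm]
  constructor
  · rintro ⟨i, hi, rfl⟩
    by_cases hex : ∃ j, s(i, j) ∈ M
    · rw [matchingPartner, dif_pos hex]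
      exact hex.choose_spec
    · exact absurd (by rw [matchingPartner, dif_neg hex]) hi
  · induction e using Sym2.ind with
    | h a b =>
      intro he
      have hab : a ≠ b := G.ne_of_adj (hM.1 he)
      exact ⟨a, by rw [hM.matchingPartner_eq he]; exact hab.symm, by rw [hM.matchingPartner_eq he]⟩

noncomputable def matchingPerms (G : SimpleGraph V) : Finset (Equiv.Perm V) :=
  {σ | Function.Involutive σ ∧ ∀ i, σ i ≠ i → G.Adj i (σ i)}

theorem card_filter_matchingPerms (k : ℕ) :
    #{σ ∈ matchingPerms G | #σ.support = 2 * k} = matchCount G k := by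
  have himage : {M : Set (Sym2 V) | IsMatchingSet G M ∧ M.ncard = k} =
      (fun σ => (permEdges σ : Set (Sym2 V))) ''
        (({σ ∈ matchingPerms G | #σ.support = 2 * k} : Finset _) : Set (Equiv.Perm V)) := by
    ext M
    simp only [Set.mem_ofPred_eq, coe_filter, matchingPerms, mem_filter, mem_univ, true_and,
      Set.mem_image]
    constructor
    · rintro ⟨hM, rfl⟩
      have hinv := hM.involutive_matchingPartner
      refine ⟨hinv.toPerm _, ⟨⟨hinv, fun i hi => G.mem_edgeSet.1 (hM.1 ?_)⟩, ?_⟩,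
        hM.permEdges_toPerm⟩
      · have hmem : s(i, hinv.toPerm _ i) ∈ (permEdges (hinv.toPerm _) : Set (Sym2 V)) :=
          mem_image_of_mem _ (Equiv.Perm.mem_support.2 hi)
        rwa [hM.permEdges_toPerm] at hmem
      · rw [card_support_eq_two_mul_card_permEdges hinv, ← Set.ncard_coe_finset,
          hM.permEdges_toPerm]
    · rintro ⟨σ, ⟨⟨hσ, hadj⟩, hcard⟩, rfl⟩
      refine ⟨isMatchingSet_permEdges hσ hadj, ?_⟩
      rw [Set.ncard_coe_finset]
      have := card_support_eq_two_mul_card_permEdges hσ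
      omega
  rw [matchCount, himage, Set.InjOn.ncard_image, Set.ncard_coe_finset]
  intro σ hσ τ hτ h
  simp only [coe_filter, matchingPerms, mem_filter, mem_univ, true_and, Set.mem_ofPred_eq]
    at hσ hτ
  exact eq_of_permEdges_eq hσ.1.1 hτ.1.1 (coe_injective h)

theorem matchCount_eq_zero_of_card_lt {k : ℕ} (hk : Fintype.card V < 2 * k) :
    matchCount G k = 0 := by
  rw [← card_filter_matchingPerms, card_eq_zero, filter_eq_empty_iff]
  intro σ _ hσ
  have := σ.support.card_le_univ
  omega

end Matchings

section Charpoly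

open Matrix

variable [Fintype V] {G : SimpleGraph V} {h : V → ℕ}

/-- The terms with `2k > n`, where `n - 2k` truncates to `0`, vanish since `m(G,k) = 0`. -/
noncomputable def matchingPoly (G : SimpleGraph V) : ℝ[X] :=
  ∑ k ∈ range (Fintype.card V + 1),
    C ((-1) ^ k * (matchCount G k : ℝ)) * X ^ (Fintype.card V - 2 * k)

theorem Equiv.Perm.sign_of_involutive {σ : Equiv.Perm V} (hσ : Function.Involutive σ) :
    Equiv.Perm.sign σ = (-1) ^ (#σ.support / 2) := by
  have hsq : σ ^ 2 = 1 := Equiv.ext fun i => by rw [sq, Equiv.Perm.mul_apply, hσ i]; rfl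
  rw [Equiv.Perm.sign_of_pow_two_eq_one hsq, Equiv.Perm.card_fixedPoints,
    Equiv.Perm.sum_cycleType, Nat.sub_sub_self σ.support.card_le_univ]

theorem prod_charmatrix_adjM_of_mem_matchingPerms {σ : Equiv.Perm V}
    (hσ : σ ∈ matchingPerms G) :
    ∏ i, charmatrix (adjM G) (σ i) i = X ^ (Fintype.card V - #σ.support) := by
  simp only [matchingPerms, mem_filter, mem_univ, true_and] at hσ
  obtain ⟨hinv, hadj⟩ := hσ
  have hmoved : ∀ i ∈ σ.support, charmatrix (adjM G) (σ i) i = -1 := fun i hi => by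
    have hi := Equiv.Perm.mem_support.1 hi
    rw [charmatrix_apply_ne _ _ _ hi, adjM, of_apply, if_pos (hadj i hi).symm, map_one]
  have hfixed : ∀ i ∈ σ.supportᶜ, charmatrix (adjM G) (σ i) i = X := fun i hi => by
    rw [mem_compl, Equiv.Perm.notMem_support] at hi
    rw [hi, charmatrix_apply_eq, adjM, of_apply, if_neg (G.irrefl), map_zero, sub_zero]
  rw [← prod_mul_prod_compl σ.support, prod_congr rfl hmoved, prod_congr rfl hfixed, prod_const,
    prod_const, card_compl, card_support_eq_two_mul_card_permEdges hinv, pow_mul, neg_one_sq,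
    one_pow, one_mul]

theorem SimpleGraph.IsForestHeight.charpoly_adjM (hh : G.IsForestHeight h) :
    (adjM G).charpoly = matchingPoly G := by
  have hvanish : ∀ σ ∉ matchingPerms G, ∏ i, charmatrix (adjM G) (σ i) i = 0 := by
    intro σ hσ
    have hnadj : ¬∀ i, σ i ≠ i → G.Adj i (σ i) := fun hadj => hσ <| by
      simpa [matchingPerms] using ⟨hh.involutive_of_forall_adj hadj, hadj⟩
    push Not at hnadj
    obtain ⟨i, hi, hnadj⟩ := hnadj
    refine prod_eq_zero (mem_univ i) ?_
    rw [charmatrix_apply_ne _ _ _ hi, adjM, of_apply, if_neg (fun h => hnadj h.symm), map_zero,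
      neg_zero]
  have hfiber : ∀ σ ∈ matchingPerms G, #σ.support / 2 ∈ range (Fintype.card V + 1) :=
    fun σ _ => mem_range.2 (by have := σ.support.card_le_univ; omega)
  rw [charpoly, det_apply, ← sum_subset (subset_univ (matchingPerms G))
    fun σ _ hσ => by rw [hvanish σ hσ, smul_zero], ← sum_fiberwise_of_maps_to hfiber]
  refine sum_congr rfl fun k _ => ?_
  have hsupp : ∀ σ ∈ matchingPerms G, #σ.support / 2 = k ↔ #σ.support = 2 * k := fun σ hσ => by
    have := card_support_eq_two_mul_card_permEdges (mem_filter.1 hσ).2.1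
    omega
  have hterm : ∀ σ ∈ {σ ∈ matchingPerms G | #σ.support = 2 * k},
      Equiv.Perm.sign σ • ∏ i, charmatrix (adjM G) (σ i) i =
        C ((-1) ^ k) * X ^ (Fintype.card V - 2 * k) := fun σ hσ => by
    obtain ⟨hσ, hcard⟩ := mem_filter.1 hσ
    rw [Equiv.Perm.sign_of_involutive (mem_filter.1 hσ).2.1,
      prod_charmatrix_adjM_of_mem_matchingPerms hσ, hcard, Nat.mul_div_cancel_left k two_pos]
    simp [Units.smul_def]
  rw [filter_congr hsupp, sum_congr rfl hterm, sum_const, card_filter_matchingPerms, nsmul_eq_mul,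
    C_mul, ← mul_assoc, mul_comm (C _), map_natCast]

end Charpoly

section Laplacian

open Matrix SimpleGraph

variable [Fintype V] {G : SimpleGraph V}

theorem vdeg_eq_degree (v : V) : vdeg G v = G.degree v := by
  rw [vdeg, Set.ncard_eq_toFinset_card', Set.toFinset_card, card_neighborSet_eq_degree]

theorem SimpleGraph.IsBipartite.charpoly_lapM (hG : G.IsBipartite) :
    (lapM G).charpoly = (signlessLapM G).charpoly := by
  obtain ⟨c⟩ := hG
  set D : Matrix V V ℝ := diagonal fun v => (-1) ^ (c v : ℕ)
  have hDD : D * D = 1 := by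
    rw [diagonal_mul_diagonal, ← diagonal_one]
    congr 1
    ext v
    rw [← mul_pow, neg_one_mul, neg_neg, one_pow]
  have hconj : D * lapM G * D = signlessLapM G := by
    ext u v
    rw [mul_diagonal, diagonal_mul]
    simp only [lapM, signlessLapM, of_apply]
    split_ifs with huv hadj
    · subst huv
      rw [mul_right_comm, ← mul_pow, neg_one_mul, neg_neg, one_pow, one_mul]
    · have hc : (c u : ℕ) + c v = 1 := by
        have := Fin.val_ne_iff.2 (c.valid hadj)
        omega
      rw [mul_neg_one, neg_mul, ← pow_add, hc, pow_one, neg_neg]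
    · simp
  rw [← hconj, mul_assoc, charpoly_mul_comm, mul_assoc, hDD, mul_one]

noncomputable def edgeIncMatrix (G : SimpleGraph V) : Matrix V G.edgeSet ℝ :=
  (G.incMatrix ℝ).submatrix id (↑)

theorem adjM_subdivision :
    adjM (subdivision G) = fromBlocks 0 (edgeIncMatrix G) (edgeIncMatrix G)ᵀ 0 := by
  ext (v | e) (w | f) <;> simp [adjM, edgeIncMatrix, incMatrix_apply', incidenceSet]

theorem edgeIncMatrix_mul_transpose : edgeIncMatrix G * (edgeIncMatrix G)ᵀ = signlessLapM G := by
  have hsum : ∀ u v : V, ∑ e : G.edgeSet, G.incMatrix ℝ u e * G.incMatrix ℝ v e =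
      ∑ e, G.incMatrix ℝ u e * G.incMatrix ℝ v e := fun u v => by
    rw [← Fintype.sum_subtype_add_sum_subtype (· ∈ G.edgeSet), left_eq_add]
    refine sum_eq_zero fun e _ => ?_
    rw [G.incMatrix_of_notMem_incidenceSet fun he => e.2 he.1, zero_mul]
  ext u v
  rw [mul_apply]
  simp only [edgeIncMatrix, submatrix_apply, transpose_apply, id]
  have hinc := congr_fun₂ (incMatrix_mul_transpose (R := ℝ) G) u v
  simp only [mul_apply, transpose_apply] at hinc
  rw [hsum, hinc]
  simp [signlessLapM, vdeg_eq_degree]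

theorem det_scalar_sub_adjM_subdivision {x : ℝ} (hx : x ≠ 0) :
    x ^ Fintype.card V * (scalar _ x - adjM (subdivision G)).det =
      x ^ Fintype.card G.edgeSet * (scalar V (x ^ 2) - signlessLapM G).det := by
  have : Invertible (scalar G.edgeSet x) :=
    (invertibleOfNonzero hx).map (scalar G.edgeSet).toMonoidHom
  have hinv : ⅟(scalar G.edgeSet x) = scalar G.edgeSet x⁻¹ :=
    invOf_eq_right_inv (by rw [← map_mul, mul_inv_cancel₀ hx, map_one])
  have hblock : scalar _ x - adjM (subdivision G) =
      fromBlocks (scalar V x) (-edgeIncMatrix G) (-(edgeIncMatrix G)ᵀ) (scalar G.edgeSet x) := by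
    rw [adjM_subdivision]
    ext (i | i) (j | j) <;> simp [fromBlocks, diagonal_apply]
  have hschur :
      x • (scalar V x - -edgeIncMatrix G * ⅟(scalar G.edgeSet x) * -(edgeIncMatrix G)ᵀ) =
        scalar V (x ^ 2) - signlessLapM G := by
    rw [hinv]
    simp only [← edgeIncMatrix_mul_transpose, scalar_apply, ← smul_one_eq_diagonal,
      Matrix.neg_mul, Matrix.mul_neg, neg_neg, Matrix.mul_smul, Matrix.mul_one, Matrix.smul_mul,
      smul_sub, smul_neg, smul_smul, mul_inv_cancel₀ hx, one_smul, sq]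
  have hdet : (scalar G.edgeSet x).det = x ^ Fintype.card G.edgeSet := by
    simp [scalar_apply, det_diagonal]
  rw [hblock, det_fromBlocks₂₂, hdet, mul_left_comm, ← det_smul, hschur]

theorem charpoly_adjM_subdivision :
    X ^ Fintype.card V * (adjM (subdivision G)).charpoly =
      X ^ Fintype.card G.edgeSet * expand ℝ 2 (signlessLapM G).charpoly := by
  refine eq_of_infinite_eval_eq _ _ ((Set.finite_singleton 0).infinite_compl.mono fun x hx => ?_)
  simp only [Set.mem_ofPred_eq, eval_mul, eval_pow, eval_X, expand_eval, eval_charpoly]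
  exact det_scalar_sub_adjM_subdivision hx

theorem coeff_matchingPoly {k : ℕ} (hk : 2 * k ≤ Fintype.card V) :
    (matchingPoly G).coeff (Fintype.card V - 2 * k) = (-1) ^ k * matchCount G k := by
  rw [matchingPoly, finsetSum_coeff, sum_eq_single k]
  · rw [coeff_C_mul_X_pow, if_pos rfl]
  · intro j _ hjk
    rw [coeff_C_mul_X_pow]
    by_cases hj : 2 * j ≤ Fintype.card V
    · rw [if_neg (by omega)]
    · rw [matchCount_eq_zero_of_card_lt (by omega), Nat.cast_zero, mul_zero, ite_self]
  · exact fun hk' => absurd (mem_range.2 (by omega)) hk'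

theorem SimpleGraph.IsTree.X_mul_matchingPoly_subdivision (hG : G.IsTree) :
    X * matchingPoly (subdivision G) = expand ℝ 2 (lapM G).charpoly := by
  obtain ⟨r⟩ := hG.connected.nonempty
  rw [← ((hG.isForestHeight_dist r).subdivision).charpoly_adjM, hG.isBipartite.charpoly_lapM]
  apply mul_left_cancel₀ (pow_ne_zero (Fintype.card G.edgeSet) X_ne_zero)
  rw [← charpoly_adjM_subdivision, ← mul_assoc, ← pow_succ, ← edgeFinset_card,
    hG.card_edgeFinset]
  -- the two charpolys of `adjM (subdivision G)` differ in their `DecidableEq` instance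
  congr!

theorem SimpleGraph.IsTree.card_sum_edgeSet_add_one (hG : G.IsTree) :
    Fintype.card (V ⊕ G.edgeSet) + 1 = 2 * Fintype.card V := by
  rw [Fintype.card_sum, ← edgeFinset_card, add_assoc, hG.card_edgeFinset, two_mul]

theorem SimpleGraph.IsTree.lapCoeff_eq_matchCount (hG : G.IsTree) {k : ℕ}
    (hk : k ≤ Fintype.card V) : lapCoeff G k = matchCount (subdivision G) k := by
  have hcard := hG.card_sum_edgeSet_add_one
  have hcoeff := congr_arg (coeff · (2 * (Fintype.card V - k))) hG.X_mul_matchingPoly_subdivision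
  simp only [coeff_expand_mul' two_pos] at hcoeff
  rw [lapCoeff, ← hcoeff]
  rcases hk.lt_or_eq with hk | rfl
  · rw [show 2 * (Fintype.card V - k) = Fintype.card (V ⊕ G.edgeSet) - 2 * k + 1 by omega,
      coeff_X_mul, coeff_matchingPoly (by omega), ← mul_assoc, ← pow_add, ← two_mul, pow_mul,
      neg_one_sq, one_pow, one_mul]
  · rw [Nat.sub_self, mul_zero, coeff_X_mul_zero, mul_zero,
      matchCount_eq_zero_of_card_lt (by omega), Nat.cast_zero]

end Laplacian

/-- Zhou–Gutman (Lemma 3.8): for every tree `T` of order `n`, the Laplacian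
coefficient `c_k(T)` equals the number of `k`-matchings of the subdivision tree,
`c_k(T) = m(S(T),k)` for `k = 0,…,n`; consequently the Laplacian coefficient
generating function equals the matching generating function of `S(T)`. -/
theorem lapCoeff_eq_matchCount_subdivision {V : Type*} [Fintype V]
    (T : SimpleGraph V) (hT : T.IsTree) :
    (∀ k ≤ Fintype.card V, lapCoeff T k = matchCount (subdivision T) k) ∧
    ∀ x : ℝ, lapGen T x = matchGen (subdivision T) x := by
  refine ⟨fun k hk => hT.lapCoeff_eq_matchCount hk, fun x => ?_⟩
  have hcard := hT.card_sum_edgeSet_add_one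
  have hle : Fintype.card V ≤ 2 * Fintype.card V := by omega
  rw [lapGen, matchGen, hcard, ← sum_subset (range_subset_range.2 hle)]
  · exact sum_congr rfl fun k hk => by rw [hT.lapCoeff_eq_matchCount (mem_range.1 hk).le]
  · intro k _ hk
    rw [matchCount_eq_zero_of_card_lt (by rw [mem_range] at hk; omega), Nat.cast_zero, zero_mul]
end

section
/- For any tree T of order n, the incidence energy equals the Laplacian-energy-like invariant and half the adjacency energy of its subdivision tree: IE(T) = LEL(T) = (1/2)·E(S(T)). -/
/-!
A tree is bipartite, and conjugating by the diagonal `±1` matrix of a 2-colouring turns the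
signless Laplacian into the Laplacian, so the two have the same spectrum: `IE(T) = LEL(T)`.
For any graph `G`, the adjacency matrix of `S(G)` is the block matrix `[[0, B], [Bᵀ, 0]]` of the
vertex–edge incidence matrix `B`, and `B Bᵀ = Q(G)`. Apart from zeros, such a block matrix has
the eigenvalues `±√μ` for the eigenvalues `μ` of `B Bᵀ`, hence `E(S(G)) = 2 IE(G)`.
-/

open scoped Classical

variable {V : Type*}

open Polynomial Matrix

lemma Polynomial.roots_multiset_prod_X_sub_C_comp_X_sq (s : Multiset ℝ) (hs : ∀ a ∈ s, 0 ≤ a) :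
    ((s.map fun a => X - C a).prod.comp (X ^ 2)).roots =
      s.map Real.sqrt + s.map fun a => -Real.sqrt a := by
  have hfactor : (s.map fun a => X - C a).prod.comp (X ^ 2) =
      ((s.map Real.sqrt + s.map fun a => -Real.sqrt a).map fun a => X - C a).prod := by
    rw [multiset_prod_comp, Multiset.map_add, Multiset.prod_add, Multiset.map_map,
      Multiset.map_map, Multiset.map_map, ← Multiset.prod_map_mul]
    congr 1
    refine Multiset.map_congr rfl fun a ha => ?_
    have hsq : C a = C (Real.sqrt a) ^ 2 := by rw [← C_pow, Real.sq_sqrt (hs a ha)]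
    simp only [Function.comp_apply, sub_comp, X_comp, C_comp, map_neg]
    rw [hsq]
    ring
  rw [hfactor, roots_multiset_prod_X_sub_C]

namespace Matrix

variable {n m R : Type*} [Fintype n] [Fintype m] [DecidableEq n] [DecidableEq m]

lemma IsHermitian.sum_eigenvalues_eq_sum_roots_charpoly {A : Matrix n n ℝ} (hA : A.IsHermitian)
    (f : ℝ → ℝ) : ∑ i, f (hA.eigenvalues i) = (A.charpoly.roots.map f).sum := by
  rw [hA.roots_charpoly_eq_eigenvalues, Multiset.map_map]
  simp

lemma charpoly_comp [CommRing R] (M : Matrix n n R) (p : R[X]) :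
    M.charpoly.comp p = (scalar n p - M.map C).det := by
  rw [charpoly, charmatrix, ← coe_compRingHom_apply, RingHom.map_det]
  congr 1
  ext i j
  by_cases h : i = j
  · subst h; simp
  · simp [h]

/- Multiplying the characteristic matrix on the right by `[[X, 0], [B', 1]]` makes it block
triangular with diagonal blocks `X² - B B'` and `X`. -/
lemma charpoly_fromBlocks_zero₁₁_zero₂₂ [CommRing R] (B : Matrix n m R) (B' : Matrix m n R) :
    (fromBlocks 0 B B' 0).charpoly * X ^ Fintype.card n =
      X ^ Fintype.card m * (B * B').charpoly.comp (X ^ 2) := by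
  let N : Matrix (n ⊕ m) (n ⊕ m) R[X] := fromBlocks (scalar n X) 0 (B'.map C) 1
  have hN : N.det = X ^ Fintype.card n := by simp [N]
  have hprod : charmatrix (fromBlocks 0 B B' 0) * N =
      fromBlocks (scalar n (X ^ 2) - (B * B').map C) (-B.map C) 0 (scalar m X) := by
    rw [charmatrix_fromBlocks, charmatrix_zero, charmatrix_zero, fromBlocks_multiply]
    congr 1
    · simp [pow_two, sub_eq_add_neg, Matrix.map_mul]
    · simp
    · rw [Matrix.neg_mul, scalar_comm X (fun _ => Commute.all _ _), neg_add_cancel]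
    · simp
  have hdet := congrArg det hprod
  rw [det_mul, hN, det_fromBlocks_zero₂₁, ← charpoly_comp] at hdet
  rw [charpoly, hdet]
  simp [mul_comm]

lemma sum_abs_roots_charpoly_fromBlocks_transpose (B : Matrix n m ℝ) :
    ((fromBlocks 0 B Bᵀ 0).charpoly.roots.map abs).sum =
      2 * ((B * Bᵀ).charpoly.roots.map Real.sqrt).sum := by
  have hpsd : (B * Bᵀ).PosSemidef := by
    simpa using posSemidef_self_mul_conjTranspose B
  set s := (B * Bᵀ).charpoly.roots
  have hs : s = Finset.univ.val.map hpsd.isHermitian.eigenvalues := by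
    simp [s, hpsd.isHermitian.roots_charpoly_eq_eigenvalues]
  have hs_nonneg : ∀ a ∈ s, 0 ≤ a := by
    simp only [hs, Multiset.mem_map]
    rintro _ ⟨i, -, rfl⟩
    exact hpsd.eigenvalues_nonneg i
  have hsplit : (B * Bᵀ).charpoly = (s.map fun a => X - C a).prod := by
    rw [hpsd.isHermitian.charpoly_eq, hs, Multiset.map_map]
    simp only [RCLike.ofReal_real_eq_id, id]
    rfl
  have hprod := charpoly_fromBlocks_zero₁₁_zero₂₂ B Bᵀ
  have hne : (fromBlocks 0 B Bᵀ 0).charpoly * X ^ Fintype.card n ≠ 0 :=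
    ((charpoly_monic _).mul (monic_X_pow _)).ne_zero
  have hroots := congrArg roots hprod
  rw [roots_mul hne, roots_mul (hprod ▸ hne), roots_X_pow, roots_X_pow, hsplit,
    roots_multiset_prod_X_sub_C_comp_X_sq s hs_nonneg] at hroots
  have hsum := congrArg (fun t => (t.map abs).sum) hroots
  simp [Multiset.map_map, Multiset.nsmul_singleton, Real.sqrt_nonneg, abs_of_nonneg] at hsum
  linarith

end Matrix

namespace SimpleGraph

variable [Fintype V] (G : SimpleGraph V)

lemma vdeg_eq_degree (v : V) : vdeg G v = G.degree v := by
  rw [vdeg, ← card_neighborSet_eq_degree, Set.ncard_eq_toFinset_card', Set.toFinset_card]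

/- Mathlib's `incMatrix` has a column for every element of `Sym2 V`; `S(G)` needs the columns
indexed by the edges only. -/
noncomputable def edgeIncMatrix : Matrix V G.edgeSet ℝ :=
  of fun v e => if v ∈ (e : Sym2 V) then 1 else 0

lemma edgeIncMatrix_mul_transpose :
    G.edgeIncMatrix * G.edgeIncMatrixᵀ = G.incMatrix ℝ * (G.incMatrix ℝ)ᵀ := by
  ext a b
  simp only [mul_apply, transpose_apply]
  have hoff (e : Sym2 V) (he : e ∉ G.edgeSet) : G.incMatrix ℝ a e * G.incMatrix ℝ b e = 0 := by
    simp [incMatrix, incidenceSet, he]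
  rw [← Fintype.sum_subtype_add_sum_subtype (· ∈ G.edgeSet),
    Fintype.sum_eq_zero (fun e : {e // e ∉ G.edgeSet} => _) fun e => hoff e e.2, add_zero]
  simp [edgeIncMatrix, incMatrix, incidenceSet]

lemma signlessLapM_eq_edgeIncMatrix_mul_transpose :
    signlessLapM G = G.edgeIncMatrix * G.edgeIncMatrixᵀ := by
  rw [edgeIncMatrix_mul_transpose, incMatrix_mul_transpose]
  ext a b
  simp [signlessLapM, vdeg_eq_degree]

lemma adjM_subdivision :
    adjM (subdivision G) = fromBlocks 0 G.edgeIncMatrix G.edgeIncMatrixᵀ 0 := by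
  ext (v | e) (w | f) <;> simp [adjM, subdivision, edgeIncMatrix]

lemma energy_subdivision : energy (subdivision G) = 2 * IE G := by
  have hE : energy (subdivision G) = ((adjM (subdivision G)).charpoly.roots.map abs).sum := by
    unfold energy
    -- `energy` was elaborated with the classical `DecidableEq` on `V ⊕ G.edgeSet`
    convert (adjM_isHermitian _).sum_eigenvalues_eq_sum_roots_charpoly abs
  rw [hE, adjM_subdivision, sum_abs_roots_charpoly_fromBlocks_transpose,
    ← signlessLapM_eq_edgeIncMatrix_mul_transpose, IE,
    (signlessLapM_isHermitian G).sum_eigenvalues_eq_sum_roots_charpoly]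

variable {G}

lemma IsBipartite.charpoly_lapM_eq (hG : G.IsBipartite) :
    (lapM G).charpoly = (signlessLapM G).charpoly := by
  obtain ⟨c⟩ := hG
  set D : Matrix V V ℝ := diagonal fun v => (-1) ^ (c v : ℕ)
  have hD : D * D = 1 := by
    simp [D, ← mul_pow]
  have hconj : lapM G = D * signlessLapM G * D := by
    ext u v
    simp only [D, mul_diagonal, diagonal_mul, lapM, signlessLapM, of_apply]
    by_cases huv : u = v
    · subst huv
      simp [mul_right_comm _ _ ((-1 : ℝ) ^ _), ← mul_pow]
    by_cases hadj : G.Adj u v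
    · have hcolors : (c u : ℕ) + c v = 1 := by
        have := Fin.val_ne_of_ne (c.valid hadj)
        omega
      simp only [huv, hadj, if_false, if_true, mul_one, ← pow_add, hcolors, pow_one]
    · simp [huv, hadj]
  rw [hconj, charpoly_mul_comm, ← mul_assoc, hD, one_mul]

lemma IsBipartite.IE_eq_LEL (hG : G.IsBipartite) : IE G = LEL G := by
  rw [IE, LEL, (signlessLapM_isHermitian G).sum_eigenvalues_eq_sum_roots_charpoly,
    (lapM_isHermitian G).sum_eigenvalues_eq_sum_roots_charpoly, hG.charpoly_lapM_eq]

end SimpleGraph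

/-- Lemma 4.1: for any tree `T` of order `n`,
`IE(T) = LEL(T) = (1/2)·E(S(T))`. -/
theorem IE_eq_LEL_eq_half_energy_subdivision {V : Type*} [Fintype V]
    (T : SimpleGraph V) (hT : T.IsTree) :
    IE T = LEL T ∧ LEL T = (1 / 2) * energy (subdivision T) := by
  have hIE := hT.isBipartite.IE_eq_LEL
  refine ⟨hIE, ?_⟩
  rw [T.energy_subdivision, hIE]
  ring
end
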